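/- arXiv:0707.1109 — 5 statements merged into one kernel-verified Lean document; each statement's English description precedes it below -/
import Mathlib

section
/- Let a be an element of a free non-abelian group F with |a| ≥ 2k for a positive integer k. Then the left translate a·B_{1/k}(a^{-∞}) together with B_{1/k}(a^{+∞}) covers the whole boundary ∂F, where B_{1/k}(v) = {w ∈ ∂F : ρ(v,w) ≤ 1/k}. -/
/-- The inverse letter. -/
def invL {α : Type*} (p : α × Bool) : α × Bool := (p.1, !p.2)

/-- The formal inverse of a word. -/
def wInv {α : Type*} (W : List (α × Bool)) : List (α × Bool) :=
  (W.map fun p => (p.1, !p.2)).reverse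

/-- A word is reduced iff it is the reduced word of the free-group element it represents. -/
def IsReducedWord {α : Type*} [DecidableEq α] (W : List (α × Bool)) : Prop :=
  (FreeGroup.mk W).toWord = W

/-- A right-infinite reduced word: no two adjacent letters form an inverse pair.  These are
exactly the points of the hyperbolic boundary `∂F`. -/
def BoundaryWord {α : Type*} (s : ℕ → α × Bool) : Prop := ∀ i, s (i + 1) ≠ invL (s i)

/-- The right-infinite word `X A A A ⋯` (requires `A ≠ []`). -/
def infWord {α : Type*} (X A : List (α × Bool)) (hA : A ≠ []) : ℕ → α × Bool := fun i =>
  if h : i < X.length then X.get ⟨i, h⟩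
  else A.get ⟨(i - X.length) % A.length, Nat.mod_lt _ (List.length_pos_iff.mpr hA)⟩

/-- Gromov product of two right-infinite words: the length of their longest common prefix. -/
noncomputable def gpInf2 {α : Type*} (s t : ℕ → α × Bool) : ℕ :=
  sSup {r : ℕ | ∀ i < r, s i = t i}

open scoped Classical in
/-- The boundary metric `ρ(w,v) = 1/((w|v)+1)` on infinite reduced words. -/
noncomputable def rhoB {α : Type*} (s t : ℕ → α × Bool) : ℝ :=
  if s = t then 0 else 1 / ((gpInf2 s t : ℝ) + 1)

/-- The number of letters of the infinite word `s` cancelled in the reduced product of the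
word `W` with `s`. -/
def cancelLen {α : Type*} [DecidableEq α] (W : List (α × Bool)) (s : ℕ → α × Bool) : ℕ :=
  ((List.range W.length).takeWhile fun i =>
    decide (W[W.length - 1 - i]? = some (invL (s i)))).length

/-- Left translation of an infinite reduced word by a free-group element: the reduced
concatenation of the reduced word of `a` with `s`. -/
def boundaryMul {α : Type*} [DecidableEq α] (a : FreeGroup α) (s : ℕ → α × Bool) :
    ℕ → α × Bool := fun i =>
  if h : i < a.toWord.length - cancelLen a.toWord s then
    a.toWord.get ⟨i, lt_of_lt_of_le h (Nat.sub_le _ _)⟩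
  else s (i - (a.toWord.length - cancelLen a.toWord s) + cancelLen a.toWord s)

/-!
Write `W` for the reduced word `X A X⁻¹` of `a`, of length `n ≥ 2k`. The points `a^{+∞} = X A A ⋯`
and `a^{-∞} = X A⁻¹ A⁻¹ ⋯` share their first `|X| + |A| > n / 2 ≥ k` letters with `W` and `W⁻¹`.
If `s` starts with the first `k` letters of `W`, it is `1/k`-close to `a^{+∞}`. Otherwise `s` leaves
`W` at some position `m < k`; then `t := (W_{≥ m})⁻¹ s_{≥ m}` is reduced, `a · t` cancels exactly the
`n - m` letters of `W_{≥ m}` so that `a · t = s`, and `t` starts with the first `n - m > k` letters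
of `W⁻¹`, hence is `1/k`-close to `a^{-∞}`.
-/

open FreeGroup

-- `Stream' β` is definitionally `ℕ → β`, so infinite words can use `++ₛ` and `Stream'.drop`.
section Streams

variable {β : Type*}

lemma Stream'.get_append (x : List β) (a : Stream' β) (n : ℕ) :
    (x ++ₛ a).get n = if h : n < x.length then x[n] else a.get (n - x.length) := by
  split_ifs with h
  · exact get_append_left n x a h
  · obtain ⟨j, rfl⟩ := Nat.exists_eq_add_of_le (not_lt.mp h)
    rw [get_append_right, Nat.add_sub_cancel_left]

lemma Stream'.eq_append_drop_of_forall_lt {x : List β} {s : Stream' β}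
    (h : ∀ i (hi : i < x.length), s.get i = x[i]) : s = x ++ₛ s.drop x.length := by
  conv_lhs => rw [← Stream'.append_take_drop x.length s]
  congr 1
  exact List.ext_getElem (Stream'.length_take _ _) fun i hi _ => by
    rw [Stream'.take_get, h i (by simpa using hi)]

lemma Stream'.forall_lt_eq_or_exists_first_ne (s : Stream' β) (W : List β) {k : ℕ}
    (hk : k ≤ W.length) :
    (∀ i (hi : i < k), s.get i = W[i]) ∨
      ∃ m, ∃ hm : m < k, (∀ i (hi : i < m), s.get i = W[i]) ∧ s.get m ≠ W[m] := by
  by_cases hagree : ∀ i (hi : i < k), s.get i = W[i]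
  · exact .inl hagree
  push Not at hagree
  classical
  obtain ⟨hm, hne⟩ := Nat.find_spec hagree
  refine .inr ⟨Nat.find hagree, hm, fun i hi => ?_, hne⟩
  by_contra hi'
  exact Nat.find_min hagree hi ⟨by omega, hi'⟩

end Streams

lemma List.length_takeWhile_range {p : ℕ → Bool} {c n : ℕ} (hcn : c ≤ n)
    (hp : ∀ j < c, p j) (hc : c < n → p c = false) :
    ((List.range n).takeWhile p).length = c := by
  obtain ⟨d, rfl⟩ := Nat.exists_eq_add_of_le hcn
  rw [List.range_add, List.takeWhile_append_of_pos (by simpa using hp)]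
  cases d with
  | zero => simp
  | succ d =>
    rw [List.range_succ_eq_map, List.map_cons, List.takeWhile_cons_of_neg (by simpa using hc)]
    simp

section FreeWords

variable {α : Type*}

lemma invL_invL (p : α × Bool) : invL (invL p) = p := by
  simp [invL]

lemma eq_invL_comm {p q : α × Bool} : p = invL q ↔ q = invL p := by
  constructor <;> rintro rfl <;> rw [invL_invL]

lemma getElem_invRev (L : List (α × Bool)) (j : ℕ) (h : j < (invRev L).length) :
    (invRev L)[j] = invL (L[L.length - 1 - j]'(by rw [invRev_length] at h; omega)) := by
  simp [invRev, invL, List.getElem_reverse]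

lemma invRev_drop_prefix (L : List (α × Bool)) (m : ℕ) : invRev (L.drop m) <+: invRev L := by
  conv_rhs => rw [← List.take_append_drop m L, invRev_append]
  exact List.prefix_append _ _

lemma FreeGroup.IsReduced.getElem_succ_ne_invL {L : List (α × Bool)} (hL : IsReduced L) (i : ℕ)
    (h : i + 1 < L.length) : L[i + 1] ≠ invL L[i] := fun heq => by
  simpa [heq, invL] using hL.getElem i h

lemma rhoB_le_one_div_of_forall_lt_eq {s t : ℕ → α × Bool} {k : ℕ} (hk : 0 < k)
    (h : ∀ i < k, s i = t i) : rhoB s t ≤ 1 / (k : ℝ) := by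
  unfold rhoB
  split_ifs with hst
  · positivity
  have hgp : k ≤ gpInf2 s t := by
    obtain ⟨j, hj⟩ := Function.ne_iff.mp hst
    exact le_csSup ⟨j, fun r hr => not_lt.mp fun hjr => hj (hr j hjr)⟩ h
  gcongr
  exact le_add_of_le_of_nonneg (by exact_mod_cast hgp) zero_le_one

lemma infWord_eq_getElem_append (X A : List (α × Bool)) (hA : A ≠ []) {i : ℕ}
    (hi : i < (X ++ A).length) : infWord X A hA i = (X ++ A)[i] := by
  rw [List.length_append] at hi
  unfold infWord
  split_ifs with hX
  · rw [List.getElem_append_left hX, List.get_eq_getElem]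
  · rw [List.getElem_append_right (not_lt.mp hX), List.get_eq_getElem]
    congr 1
    exact Nat.mod_eq_of_lt (by omega)

lemma BoundaryWord.drop {s : Stream' (α × Bool)} (hs : BoundaryWord s) (m : ℕ) :
    BoundaryWord (s.drop m) := fun i => by
  simpa [Stream'.drop, Stream'.get, Nat.add_right_comm] using hs (i + m)

lemma boundaryWord_append {L : List (α × Bool)} {u : Stream' (α × Bool)} (hL : IsReduced L)
    (hu : BoundaryWord u) (hjoin : ∀ h : 0 < L.length, u.get 0 ≠ invL L[L.length - 1]) :
    BoundaryWord (L ++ₛ u) := fun i => by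
  change Stream'.get _ (i + 1) ≠ invL (Stream'.get _ i)
  rw [Stream'.get_append, Stream'.get_append]
  split_ifs with hi₁ hi₀ hi₀
  · exact hL.getElem_succ_ne_invL i hi₁
  · omega
  · convert hjoin (by omega) using 3 <;> omega
  · rw [show i + 1 - L.length = i - L.length + 1 by omega]
    exact hu _

variable [DecidableEq α]

lemma cancelLen_eq {W : List (α × Bool)} {t : ℕ → α × Bool} {c : ℕ} (hc : c ≤ W.length)
    (hcancel : ∀ j (h : j < c), W[W.length - 1 - j] = invL (t j))
    (hstop : ∀ h : c < W.length, W[W.length - 1 - c] ≠ invL (t c)) : cancelLen W t = c :=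
  List.length_takeWhile_range hc
    (fun j hj => by
      simp [List.getElem?_eq_getElem (show W.length - 1 - j < W.length by omega), hcancel j hj])
    (fun h => by
      simp [List.getElem?_eq_getElem (show W.length - 1 - c < W.length by omega), hstop h])

lemma boundaryMul_eq_take_append_drop (a : FreeGroup α) (t : Stream' (α × Bool)) :
    boundaryMul a t = a.toWord.take (a.toWord.length - cancelLen a.toWord t) ++ₛ
      t.drop (cancelLen a.toWord t) := by
  funext i
  change _ = Stream'.get _ i
  rw [Stream'.get_append]
  simp only [List.length_take_of_le (Nat.sub_le _ _), boundaryMul, List.getElem_take,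
    List.get_eq_getElem]
  rfl

lemma boundaryMul_invRev_drop_append (a : FreeGroup α) {m : ℕ} (hm : m ≤ a.toWord.length)
    (u : Stream' (α × Bool)) (hu : ∀ h : 0 < m, a.toWord[m - 1] ≠ invL (u.get 0)) :
    boundaryMul a (invRev (a.toWord.drop m) ++ₛ u) = a.toWord.take m ++ₛ u := by
  set W := a.toWord
  have hlen : (invRev (W.drop m)).length = W.length - m := by simp
  have hcancel : cancelLen W (invRev (W.drop m) ++ₛ u) = W.length - m := by
    refine cancelLen_eq (Nat.sub_le _ _) (fun j hj => ?_) (fun h => ?_)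
    · change _ = invL (Stream'.get _ j)
      rw [Stream'.get_append, dif_pos (by omega), getElem_invRev, invL_invL, List.getElem_drop]
      congr 1
      rw [List.length_drop]
      omega
    · have hjunction := Stream'.get_append_length (invRev (W.drop m)) u
      rw [hlen] at hjunction
      change _ ≠ invL (Stream'.get _ _)
      rw [hjunction]
      convert hu (by omega) using 2
      omega
  rw [boundaryMul_eq_take_append_drop, hcancel, Nat.sub_sub_self hm, ← hlen,
    Stream'.drop_append_stream]

lemma exists_boundaryMul_eq_of_first_ne (a : FreeGroup α) {s : ℕ → α × Bool}
    (hs : BoundaryWord s) {m : ℕ} (hm : m < a.toWord.length)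
    (hprefix : ∀ i (hi : i < m), s i = a.toWord[i]) (hne : s m ≠ a.toWord[m]) :
    ∃ t : ℕ → α × Bool, BoundaryWord t ∧
      (∀ i (hi : i < a.toWord.length - m),
        t i = (invRev a.toWord)[i]'(by rw [invRev_length]; omega)) ∧
      boundaryMul a t = s := by
  set W := a.toWord
  have hred : IsReduced (invRev (W.drop m)) :=
    (toWord_inv a ▸ isReduced_toWord).infix (invRev_drop_prefix W m).isInfix
  refine ⟨invRev (W.drop m) ++ₛ Stream'.drop m s, boundaryWord_append hred (hs.drop m) ?_, ?_, ?_⟩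
  · intro h
    rw [getElem_invRev, invL_invL]
    simpa [Stream'.drop, Stream'.get] using hne
  · intro i hi
    change Stream'.get _ i = _
    rw [Stream'.get_append_left _ _ _ (by simpa using hi)]
    exact (invRev_drop_prefix W m).getElem _
  · have hjoin : ∀ h : 0 < m, W[m - 1] ≠ invL ((Stream'.drop m s).get 0) := fun h => by
      rw [ne_eq, eq_invL_comm, ← hprefix (m - 1) (by omega)]
      simpa [Stream'.drop, Stream'.get, Nat.sub_add_cancel h] using hs (m - 1)
    rw [boundaryMul_invRev_drop_append a hm.le _ hjoin]
    have hsplit := Stream'.eq_append_drop_of_forall_lt (x := W.take m) (s := s) fun i hi => by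
      rw [List.length_take_of_le hm.le] at hi
      simpa [Stream'.get] using hprefix i hi
    rw [List.length_take_of_le hm.le] at hsplit
    exact hsplit.symm

end FreeWords

theorem translate_ball_union_ball_eq_boundary_general {α : Type*} [DecidableEq α]
    (a : FreeGroup α) (k : ℕ) (hk : 0 < k)
    (hlen : 2 * k ≤ a.toWord.length)
    (X A : List (α × Bool))
    (hdec : a.toWord = X ++ A ++ wInv X) (hA : A ≠ []) (hA' : wInv A ≠ [])
    (s : ℕ → α × Bool) (hs : BoundaryWord s) :
    rhoB s (infWord X A hA) ≤ 1 / (k : ℝ) ∨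
      ∃ t : ℕ → α × Bool, BoundaryWord t ∧ rhoB t (infWord X (wInv A) hA') ≤ 1 / (k : ℝ) ∧
        boundaryMul a t = s := by
  have hprefix : X ++ A <+: a.toWord := hdec ▸ List.prefix_append _ _
  have hprefix_inv : X ++ wInv A <+: invRev a.toWord := by
    rw [hdec, invRev_append, invRev_append, show wInv X = invRev X from rfl, invRev_invRev,
      ← List.append_assoc]
    exact List.prefix_append _ _
  have hWlen : a.toWord.length = (X ++ A).length + X.length := by simp [hdec, wInv, Nat.add_assoc]
  have hX : X.length < (X ++ A).length := by simpa using List.length_pos_iff.mpr hA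
  have hkXA : k ≤ (X ++ A).length := by omega
  have hkXA' : k ≤ (X ++ wInv A).length := by simpa [wInv] using hkXA
  obtain hagree | ⟨m, hmk, hagree, hne⟩ :=
    Stream'.forall_lt_eq_or_exists_first_ne s a.toWord (k := k) (by omega)
  · left
    refine rhoB_le_one_div_of_forall_lt_eq hk fun i hi => (hagree i hi).trans ?_
    rw [infWord_eq_getElem_append _ _ _ (by omega)]
    exact (hprefix.getElem _).symm
  · right
    obtain ⟨t, ht, htW, rfl⟩ := exists_boundaryMul_eq_of_first_ne a hs (by omega) hagree hne
    refine ⟨t, ht, rhoB_le_one_div_of_forall_lt_eq hk fun i hi => ?_, rfl⟩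
    rw [htW i (by omega), infWord_eq_getElem_append _ _ _ (by omega)]
    exact (hprefix_inv.getElem _).symm

/-- Let `a ∈ F` with `|a| ≥ 2k`.  Then `a·B_{1/k}(a^{-∞}) ∪ B_{1/k}(a^{+∞}) = ∂F`:
every infinite reduced word `s` either lies in the closed `1/k`-ball around
`a^{+∞} = X A^{+∞}`, or is the left translate by `a` of an infinite reduced word lying in the
closed `1/k`-ball around `a^{-∞} = X (A⁻¹)^{+∞}`. -/
theorem translate_ball_union_ball_eq_boundary {α : Type*} [DecidableEq α]
    (a : FreeGroup α) (ha : a ≠ 1) (k : ℕ) (hk : 0 < k)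
    (hlen : 2 * k ≤ a.toWord.length)
    (X A : List (α × Bool)) (hX : IsReducedWord X) (hAcyc : IsReducedWord (A ++ A))
    (hdec : a.toWord = X ++ A ++ wInv X) (hA : A ≠ []) (hA' : wInv A ≠ [])
    (s : ℕ → α × Bool) (hs : BoundaryWord s) :
    rhoB s (infWord X A hA) ≤ 1 / (k : ℝ) ∨
      ∃ t : ℕ → α × Bool, BoundaryWord t ∧ rhoB t (infWord X (wInv A) hA') ≤ 1 / (k : ℝ) ∧
        boundaryMul a t = s :=
  translate_ball_union_ball_eq_boundary_general a k hk hlen X A hdec hA hA' s hs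
end

section
/- Let F be a free non-abelian group acting on its boundary ∂F, and let a ∈ F satisfy |wing(a)| ≥ k for a positive integer k. Then for every Borel probability measure λ on ∂F there exists i ∈ {1,...,k} such that the pushforward measure a^i λ assigns mass at least 1 - 1/k to some closed ball of radius 1/k in (∂F, ρ). -/
/-- The hyperbolic boundary `∂F` of the free group: right-infinite reduced words. -/
def Boundary (α : Type*) := {s : ℕ → α × Bool // BoundaryWord s}

/-- Borel structure on the boundary (generated by the prefix cylinders). -/
instance {α : Type*} : MeasurableSpace (Boundary α) :=
  MeasurableSpace.comap Subtype.val (@MeasurableSpace.pi ℕ (fun _ => α × Bool) (fun _ => ⊤))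

/-! The bad event for `a ^ i` is the cylinder of boundary points `w` against which `a ^ i`
cancels into its initial wing `X`; off it, `a ^ i w` begins with `X`, hence lies within `1/k`
of a fixed point extending the first `k` letters of `X`. Writing `a ^ i = X A^i X⁻¹`, these
cylinders for `i = 1, …, k` are pairwise disjoint: at the depth where the `i`-th one sees the
last letter of `X`, every later one sees the last letter of `A`, and the two differ because
`A X⁻¹` is reduced. So one of the `k` cylinders has mass at most `1/k`. -/

theorem wInv_eq_invRev {α : Type*} (W : List (α × Bool)) : wInv W = FreeGroup.invRev W := rfl

theorem ne_invL_of_fst_eq_imp_snd_eq {α : Type*} {p q : α × Bool} (h : p.1 = q.1 → p.2 = q.2) :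
    q ≠ invL p := by
  rintro rfl
  simp [invL] at h

theorem List.getElem?_length_sub_one_sub_length_append {β : Type*} {U S : List β}
    (hU : U ≠ []) : (U ++ S)[(U ++ S).length - 1 - S.length]? = U.getLast? := by
  have := List.length_pos_iff.mpr hU
  rw [List.getLast?_eq_getElem?, List.length_append,
    List.getElem?_append_left (by omega)]
  congr 1
  omega

theorem List.getLast?_append_flatten_replicate {β : Type*} (U V : List β) {n : ℕ}
    (hn : n ≠ 0) : (U ++ (List.replicate n V).flatten).getLast? = (U ++ V).getLast? := by
  simp [List.getLast?_append, List.getLast?_flatten_replicate hn]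

namespace FreeGroup

variable {α : Type*}

theorem isReducedWord_iff [DecidableEq α] {W : List (α × Bool)} :
    IsReducedWord W ↔ IsReduced W := by
  rw [IsReducedWord, toWord_mk, isReduced_iff_reduce_eq]

theorem IsReduced.isCyclicallyReduced_of_append_self {L : List (α × Bool)}
    (h : IsReduced (L ++ L)) : IsCyclicallyReduced L :=
  ⟨h.infix ⟨[], L, by simp⟩, (List.isChain_append.mp h).2.2⟩

theorem IsReduced.getLast?_append_ne {U V : List (α × Bool)}
    (h : IsReduced (U ++ V ++ invRev U)) (hU : U ≠ []) :
    (U ++ V).getLast? ≠ U.getLast? := by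
  intro heq
  have hlast : U.getLast hU ∈ (U ++ V).getLast? := by
    rw [heq, List.getLast?_eq_some_getLast hU]; rfl
  have hhead : invL (U.getLast hU) ∈ (invRev U).head? := by
    simp [invRev, List.getLast?_eq_some_getLast hU, invL]
  exact ne_invL_of_fst_eq_imp_snd_eq ((List.isChain_append.mp h).2.2 _ hlast _ hhead) rfl

theorem toWord_pow_of_toWord_eq [DecidableEq α] {a : FreeGroup α} {X A : List (α × Bool)}
    (hA : IsCyclicallyReduced A) (ha : a.toWord = X ++ A ++ invRev X) {n : ℕ} (hn : n ≠ 0) :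
    (a ^ n).toWord = X ++ (List.replicate n A).flatten ++ invRev X := by
  have hconj : a = mk X * mk A * (mk X)⁻¹ := by
    rw [← mk_toWord (x := a), ha, inv_mk, mul_mk, mul_mk]
  rw [hconj, conj_pow, pow_mk, inv_mk, mul_mk, mul_mk, toWord_mk]
  exact (IsReduced.append_flatten_replicate_append hA (ha ▸ isReduced_toWord) hn).reduce_eq

end FreeGroup

theorem rhoB_le_of_forall_lt_eq {α : Type*} {s t : ℕ → α × Bool} {n : ℕ}
    (h : ∀ p < n, s p = t p) : rhoB s t ≤ 1 / ((n : ℝ) + 1) := by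
  unfold rhoB
  split_ifs with hst
  · positivity
  · obtain ⟨d, hd⟩ := Function.ne_iff.mp hst
    have hn : n ≤ gpInf2 s t :=
      le_csSup ⟨d, fun r hr => not_lt.mp fun hdr => hd (hr d hdr)⟩ h
    gcongr

theorem exists_boundary_extending_of_isReduced {α : Type*} {L : List (α × Bool)}
    (hL : FreeGroup.IsReduced L) (hne : L ≠ []) :
    ∃ v : Boundary α, ∀ p (hp : p < L.length), v.1 p = L[p] := by
  have hlen := List.length_pos_iff.mpr hne
  refine ⟨⟨fun p => L[min p (L.length - 1)], fun p => ?_⟩, fun p hp => ?_⟩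
  · rcases lt_or_ge (p + 1) L.length with hp | hp
    · simp only [min_eq_left (by omega : p + 1 ≤ L.length - 1),
        min_eq_left (by omega : p ≤ L.length - 1)]
      exact ne_invL_of_fst_eq_imp_snd_eq (List.isChain_iff_getElem.mp hL p hp)
    · simp only [min_eq_right (by omega : L.length - 1 ≤ p + 1),
        min_eq_right (by omega : L.length - 1 ≤ p)]
      exact ne_invL_of_fst_eq_imp_snd_eq fun _ => rfl
  · simp only [min_eq_left (by omega : p ≤ L.length - 1)]

theorem measurableSet_setOf_apply_mem {α : Type*} (j : ℕ) (S : Set (α × Bool)) :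
    MeasurableSet {w : Boundary α | w.1 j ∈ S} :=
  (@measurable_pi_apply ℕ (fun _ => α × Bool) (fun _ => ⊤) j).comp
    (@comap_measurable _ _ (@MeasurableSpace.pi ℕ (fun _ => α × Bool) fun _ => ⊤) Subtype.val)
    trivial

section Cancellation

variable {α : Type*}

/-- For `m < W.length`: the boundary points beginning with the formal inverse of the last
`m + 1` letters of `W`, i.e. those against which `W` cancels more than `m` letters. -/
def cancelCylinder (W : List (α × Bool)) (m : ℕ) : Set (Boundary α) :=
  {w | ∀ j ≤ m, W[W.length - 1 - j]? = some (invL (w.1 j))}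

theorem measurableSet_cancelCylinder (W : List (α × Bool)) (m : ℕ) :
    MeasurableSet (cancelCylinder W m) := by
  have hrw : cancelCylinder W m =
      ⋂ j ∈ Set.Iic m, {w : Boundary α | W[W.length - 1 - j]? = some (invL (w.1 j))} := by
    ext w
    simp [cancelCylinder]
  rw [hrw]
  exact .biInter (Set.to_countable _) fun j _ =>
    measurableSet_setOf_apply_mem j {p | W[W.length - 1 - j]? = some (invL p)}

theorem disjoint_cancelCylinder {W W' : List (α × Bool)} {m m' : ℕ} (hm : m ≤ m')
    (hne : W[W.length - 1 - m]? ≠ W'[W'.length - 1 - m]?) :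
    Disjoint (cancelCylinder W m) (cancelCylinder W' m') :=
  Set.disjoint_left.mpr fun _ hw hw' => hne ((hw m le_rfl).trans (hw' m hm).symm)

variable [DecidableEq α]

theorem getElem?_eq_invL_of_lt_cancelLen {W : List (α × Bool)} {s : ℕ → α × Bool} {j : ℕ}
    (h : j < cancelLen W s) : W[W.length - 1 - j]? = some (invL (s j)) := by
  set P : ℕ → Bool := fun i => decide (W[W.length - 1 - i]? = some (invL (s i)))
  have hpre := List.takeWhile_prefix P (l := List.range W.length)
  have hj : ((List.range W.length).takeWhile P)[j]'h = j := by
    rw [hpre.getElem h, List.getElem_range]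
  simpa [P, hj] using List.mem_takeWhile_imp (List.getElem_mem h)

theorem cancelLen_le_of_notMem_cancelCylinder {W : List (α × Bool)} {m : ℕ} {w : Boundary α}
    (hw : w ∉ cancelCylinder W m) : cancelLen W w.1 ≤ m := by
  by_contra! hlt
  exact hw fun j hj => getElem?_eq_invL_of_lt_cancelLen (by omega)

theorem boundaryMul_apply_of_cancelLen_le {g : FreeGroup α} {U V : List (α × Bool)}
    (hg : g.toWord = U ++ V) {s : ℕ → α × Bool} (hs : cancelLen g.toWord s ≤ V.length)
    {p : ℕ} (hp : p < U.length) : boundaryMul g s p = U[p] := by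
  have hlt : p < g.toWord.length - cancelLen g.toWord s := by
    rw [hg, List.length_append] at *; omega
  simp only [boundaryMul, dif_pos hlt, List.get_eq_getElem]
  simp [hg, List.getElem_append_left hp]

end Cancellation

section PowerCylinders

open FreeGroup

variable {α : Type*} [DecidableEq α] {a : FreeGroup α} {X A : List (α × Bool)}

theorem disjoint_cancelCylinder_pow (hA : IsCyclicallyReduced A)
    (ha : a.toWord = X ++ A ++ invRev X) (hX : X ≠ []) {i j : ℕ} (hi : i ≠ 0) (hij : i < j) :
    Disjoint (cancelCylinder (a ^ i).toWord ((List.replicate i A).flatten ++ invRev X).length)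
      (cancelCylinder (a ^ j).toWord ((List.replicate j A).flatten ++ invRev X).length) := by
  obtain ⟨t, rfl⟩ : ∃ t, j = t + i := ⟨j - i, by omega⟩
  have hred : IsReduced (X ++ A ++ invRev X) := ha ▸ isReduced_toWord
  have hXt : X ++ (List.replicate t A).flatten ≠ [] := by simp [hX]
  have hWi : (a ^ i).toWord = X ++ ((List.replicate i A).flatten ++ invRev X) := by
    rw [toWord_pow_of_toWord_eq hA ha hi, List.append_assoc]
  have hWj : (a ^ (t + i)).toWord =
      (X ++ (List.replicate t A).flatten) ++ ((List.replicate i A).flatten ++ invRev X) := by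
    rw [toWord_pow_of_toWord_eq hA ha (by omega), List.replicate_add, List.flatten_append]
    simp only [List.append_assoc]
  refine disjoint_cancelCylinder (by simp [add_mul]) ?_
  rw [hWi, hWj, List.getElem?_length_sub_one_sub_length_append hX,
    List.getElem?_length_sub_one_sub_length_append hXt,
    List.getLast?_append_flatten_replicate _ _ (by omega : t ≠ 0)]
  exact (hred.getLast?_append_ne hX).symm

end PowerCylinders

theorem MeasureTheory.exists_measure_le_div_card {Ω ι : Type*} [MeasurableSpace Ω]
    (μ : Measure Ω) {s : Finset ι} (hs : s.Nonempty) {D : ι → Set Ω}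
    (hD : ∀ i ∈ s, MeasurableSet (D i)) (hdisj : (s : Set ι).PairwiseDisjoint D) :
    ∃ i ∈ s, μ (D i) ≤ μ Set.univ / s.card := by
  refine ENNReal.exists_le_of_sum_le hs ?_
  rw [Finset.sum_const, nsmul_eq_mul, ENNReal.mul_div_cancel (by simpa using hs.ne_empty)
    (ENNReal.natCast_ne_top _), ← measure_biUnion_finset hdisj hD]
  exact measure_mono (Set.subset_univ _)

open MeasureTheory in
theorem power_collection_contracting_general {α : Type*} [DecidableEq α]
    (a : FreeGroup α) (X A : List (α × Bool))
    (hAcyc : IsReducedWord (A ++ A)) (hdec : a.toWord = X ++ A ++ wInv X)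
    (k : ℕ) (hk : 0 < k) (hwing : k ≤ X.length)
    (lam : Measure (Boundary α)) (hlam : IsProbabilityMeasure lam) :
    ∃ i : ℕ, 1 ≤ i ∧ i ≤ k ∧ ∃ v : Boundary α,
      1 - 1 / (k : ENNReal) ≤
        lam {w : Boundary α | rhoB (boundaryMul (a ^ i) w.1) v.1 ≤ 1 / (k : ℝ)} := by
  rw [wInv_eq_invRev] at hdec
  have hX : X ≠ [] := List.ne_nil_of_length_pos (by omega)
  have hA := (FreeGroup.isReducedWord_iff.mp hAcyc).isCyclicallyReduced_of_append_self
  set S : ℕ → List (α × Bool) := fun n => (List.replicate n A).flatten ++ FreeGroup.invRev X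
  set D : ℕ → Set (Boundary α) := fun n => cancelCylinder (a ^ n).toWord (S n).length
  have hdisj : (↑(Finset.Icc 1 k) : Set ℕ).PairwiseDisjoint D := by
    intro i hi j hj hij
    simp only [Finset.coe_Icc, Set.mem_Icc] at hi hj
    rcases hij.lt_or_gt with h | h
    · exact disjoint_cancelCylinder_pow hA hdec hX (by omega) h
    · exact (disjoint_cancelCylinder_pow hA hdec hX (by omega) h).symm
  obtain ⟨i, hi, hDi⟩ := exists_measure_le_div_card lam (Finset.nonempty_Icc.mpr hk)
    (fun n _ => measurableSet_cancelCylinder _ _) hdisj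
  rw [Finset.mem_Icc] at hi
  have hXk : FreeGroup.IsReduced (X.take k) :=
    ((hdec ▸ FreeGroup.isReduced_toWord).infix ⟨[], A ++ FreeGroup.invRev X, by simp⟩).infix
      (X.take_prefix k).isInfix
  obtain ⟨v, hv⟩ := exists_boundary_extending_of_isReduced hXk (by simp [hX]; omega)
  refine ⟨i, hi.1, hi.2, v, ?_⟩
  calc 1 - 1 / (k : ENNReal) ≤ 1 - lam (D i) := by
        gcongr; simpa using hDi
    _ = lam (D i)ᶜ := (prob_compl_eq_one_sub (measurableSet_cancelCylinder _ _)).symm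
    _ ≤ _ := measure_mono fun w hw => ?_
  have hmul : ∀ p < k, boundaryMul (a ^ i) w.1 p = v.1 p := fun p hp => by
    rw [boundaryMul_apply_of_cancelLen_le
      (by rw [FreeGroup.toWord_pow_of_toWord_eq hA hdec (by omega), List.append_assoc])
      (cancelLen_le_of_notMem_cancelCylinder hw) (by omega), hv p (by simp; omega)]
    simp
  calc rhoB (boundaryMul (a ^ i) w.1) v.1 ≤ 1 / ((k : ℝ) + 1) := rhoB_le_of_forall_lt_eq hmul
    _ ≤ 1 / k := by gcongr; linarith

open MeasureTheory in
/-- If `a ∈ F` has wing of length at least `k ≥ 1`, then for every Borel probability measure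
`λ` on `∂F` there is `i ∈ {1, …, k}` such that the pushforward of `λ` by `a^i` gives mass at
least `1 - 1/k` to some closed ball of radius `1/k`: the collection `{a, …, a^k}` is totally
`1/k`-contracting. -/
theorem power_collection_contracting {α : Type*} [DecidableEq α]
    (a : FreeGroup α) (X A : List (α × Bool)) (hX : IsReducedWord X)
    (hAcyc : IsReducedWord (A ++ A)) (hdec : a.toWord = X ++ A ++ wInv X)
    (k : ℕ) (hk : 0 < k) (hwing : k ≤ X.length)
    (lam : Measure (Boundary α)) (hlam : IsProbabilityMeasure lam) :
    ∃ i : ℕ, 1 ≤ i ∧ i ≤ k ∧ ∃ v : Boundary α,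
      1 - 1 / (k : ENNReal) ≤
        lam {w : Boundary α | rhoB (boundaryMul (a ^ i) w.1) v.1 ≤ 1 / (k : ℝ)} :=
  power_collection_contracting_general a X A hAcyc hdec k hk hwing lam hlam
end

section
/- Suppose a countable group G acts by homeomorphisms on a compact metric space M, and μ is a probability measure on G such that M is μ-proximal. Then the μ-stationary Borel probability measure on M is unique. -/
/-!
Apply proximality to the stationary measure `ν = (ν₁ + ν₂) / 2`: along almost every path `τ` of the
walk, `τₙ ν → δ_w`, and since `ν₁, ν₂ ≤ 2 ν` also `τₙ ν₁ → δ_w` and `τₙ ν₂ → δ_w`. Stationarity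
makes `a ↦ ∫ f (a • x) dνᵢ` a bounded `μ`-harmonic function, so `E ∫ f d(τₙ νᵢ) = ∫ f dνᵢ` for every
`n`. Hence `∫ f dν₁ - ∫ f dν₂ = E [∫ f d(τₙ ν₁) - ∫ f d(τₙ ν₂)] → 0`.
-/

open MeasureTheory ProbabilityTheory Filter Topology

/-- Position of the right random walk after `n` steps. -/
def walk {G Ω : Type*} [Group G] (X : ℕ → Ω → G) (ω : Ω) (n : ℕ) : G :=
  ((List.range n).map fun i => X i ω).prod

/-- `X` is a realization of the right random `μ`-walk increments. -/
def IsRW {G Ω : Type*} [Group G] [MeasurableSpace G] [MeasurableSpace Ω]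
    (μ : Measure G) (P : Measure Ω) (X : ℕ → Ω → G) : Prop :=
  (∀ i, Measurable (X i)) ∧ iIndepFun X P ∧
    ∀ i, Measure.map (X i) P = μ

/-- `ν` is `μ`-stationary: `μ * ν = ∑_g μ{g} · gν = ν`. -/
def Stationary {G M : Type*} [Group G] [MeasurableSpace G] [MulAction G M]
    [MeasurableSpace M] (μ : Measure G) (ν : Measure M) : Prop :=
  Measure.sum (fun g : G => μ {g} • Measure.map (fun x : M => g • x) ν) = ν

/-- Weak convergence of a sequence of measures to the point mass at `w`. -/
def TendstoPointMass {M : Type*} [TopologicalSpace M] [MeasurableSpace M]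
    (σ : ℕ → Measure M) (w : M) : Prop :=
  ∀ f : BoundedContinuousFunction M ℝ, Tendsto (fun i => ∫ x, f x ∂(σ i)) atTop (𝓝 (f w))

/-- `(M, ν)` is a `μ`-boundary: for a.e. path `τ` of the right random `μ`-walk the measures
`τ_i ν` converge weakly to a point mass. -/
def MuBoundary {G M : Type*} [Group G] [MeasurableSpace G] [MulAction G M]
    [MeasurableSpace M] [TopologicalSpace M] (μ : Measure G) (ν : Measure M) : Prop :=
  ∀ (Ω : Type) (_ : MeasurableSpace Ω) (P : Measure Ω), IsProbabilityMeasure P →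
    ∀ X : ℕ → Ω → G, IsRW μ P X →
      ∀ᵐ ω ∂P, ∃ w : M,
        TendstoPointMass (fun i => Measure.map (fun x : M => walk X ω i • x) ν) w

open scoped ENNReal BoundedContinuousFunction

section RandomWalk

variable {G Ω : Type*} [Group G]

@[simp]
lemma walk_zero (X : ℕ → Ω → G) (ω : Ω) : walk X ω 0 = 1 := rfl

lemma walk_succ (X : ℕ → Ω → G) (ω : Ω) (n : ℕ) :
    walk X ω (n + 1) = walk X ω n * X n ω := by
  simp [walk, List.range_succ]

variable [Countable G] [MeasurableSpace G] [MeasurableSingletonClass G] [MeasurableSpace Ω]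

lemma measurable_walk {X : ℕ → Ω → G} (hX : ∀ i, Measurable (X i)) (n : ℕ) :
    Measurable (fun ω => walk X ω n) := by
  induction n with
  | zero => simp only [walk_zero]; exact measurable_const
  | succ n ih =>
    simp only [walk_succ]
    exact (Measurable.of_discrete (f := fun p : G × G => p.1 * p.2)).comp (ih.prodMk (hX n))

-- `MuBoundary` only quantifies over `Ω : Type`, so the increments are drawn as `ℕ`-valued codes.
lemma exists_isRW (μ : Measure G) [IsProbabilityMeasure μ] :
    ∃ (Ω : Type) (_ : MeasurableSpace Ω) (P : Measure Ω), IsProbabilityMeasure P ∧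
      ∃ X : ℕ → Ω → G, IsRW μ P X := by
  obtain ⟨e, he⟩ := exists_injective_nat G
  have : Nonempty G := ⟨1⟩
  have : IsProbabilityMeasure (μ.map e) := Measure.isProbabilityMeasure_map .of_discrete
  obtain ⟨Ω, _, P, Y, hYm, hYlaw, hYind, hP⟩ := exists_iid ℕ (μ.map e)
  refine ⟨Ω, _, P, hP, fun i => Function.invFun e ∘ Y i,
    fun i => Measurable.of_discrete.comp (hYm i), hYind.comp _ fun _ => .of_discrete, fun i => ?_⟩
  rw [← Measure.map_map .of_discrete (hYm i), (hYlaw i).map_eq,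
    Measure.map_map .of_discrete .of_discrete, (Function.leftInverse_invFun he).comp_eq_id,
    Measure.map_id]

lemma indepFun_walk {P : Measure Ω} {X : ℕ → Ω → G} (hXm : ∀ i, Measurable (X i))
    (hXind : iIndepFun X P) (n : ℕ) : IndepFun (fun ω => walk X ω n) (X n) P := by
  let past : (Finset.range n → G) → G := fun v =>
    ((List.range n).map fun i => if h : i ∈ Finset.range n then v ⟨i, h⟩ else 1).prod
  let present : (({n} : Finset ℕ) → G) → G := fun v => v ⟨n, Finset.mem_singleton_self n⟩
  have hpast : (fun ω => walk X ω n) = past ∘ fun ω (i : Finset.range n) => X i ω := by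
    funext ω
    refine congrArg List.prod (List.map_congr_left fun i hi => ?_)
    rw [dif_pos (Finset.mem_range.2 (List.mem_range.1 hi))]
  rw [hpast]
  exact (hXind.indepFun_finset _ _ (by simp) hXm).comp (φ := past) (ψ := present)
    .of_discrete .of_discrete

lemma IsRW.map_walk_prod {μ : Measure G} {P : Measure Ω} [IsProbabilityMeasure P]
    {X : ℕ → Ω → G} (hX : IsRW μ P X) (n : ℕ) :
    P.map (fun ω => (walk X ω n, X n ω)) = (P.map fun ω => walk X ω n).prod μ := by
  rw [← hX.2.2 n]
  exact (indepFun_iff_map_prod_eq_prod_map_map (measurable_walk hX.1 n).aemeasurable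
    (hX.1 n).aemeasurable).1 (indepFun_walk hX.1 hX.2.1 n)

lemma IsRW.integral_walk_of_harmonic {μ : Measure G} [IsProbabilityMeasure μ] {P : Measure Ω}
    [IsProbabilityMeasure P] {X : ℕ → Ω → G} (hX : IsRW μ P X) {φ : G → ℝ} {C : ℝ}
    (hφC : ∀ a, ‖φ a‖ ≤ C) (hφ : ∀ a, ∫ g, φ (a * g) ∂μ = φ a) (n : ℕ) :
    ∫ ω, φ (walk X ω n) ∂P = φ 1 := by
  induction n with
  | zero => simp
  | succ n ih =>
    have hwalk := measurable_walk hX.1 n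
    have : IsProbabilityMeasure (P.map fun ω => walk X ω n) :=
      Measure.isProbabilityMeasure_map hwalk.aemeasurable
    calc ∫ ω, φ (walk X ω (n + 1)) ∂P
        = ∫ p : G × G, φ (p.1 * p.2) ∂(P.map fun ω => (walk X ω n, X n ω)) := by
          rw [integral_map (hwalk.prodMk (hX.1 n)).aemeasurable
            Measurable.of_discrete.aestronglyMeasurable]
          simp only [walk_succ]
      _ = ∫ a, ∫ g, φ (a * g) ∂μ ∂(P.map fun ω => walk X ω n) := by
          rw [hX.map_walk_prod n]
          exact integral_prod _ ((integrable_const C).mono'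
            Measurable.of_discrete.aestronglyMeasurable (.of_forall fun _ => hφC _))
      _ = ∫ ω, φ (walk X ω n) ∂P := by
          simp only [hφ]
          exact integral_map hwalk.aemeasurable Measurable.of_discrete.aestronglyMeasurable
      _ = φ 1 := ih

end RandomWalk

lemma norm_integral_comp_smul_le {G M : Type*} [SMul G M] [TopologicalSpace M] [MeasurableSpace M]
    (ν : Measure M) [IsFiniteMeasure ν] (f : M →ᵇ ℝ) (a : G) :
    ‖∫ x, f (a • x) ∂ν‖ ≤ ‖f‖ * ν.real Set.univ :=
  norm_integral_le_of_norm_le_const (.of_forall fun _ => f.norm_coe_le_norm _)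

section Stationary

variable {G M : Type*} [Group G] [MeasurableSpace G] [MulAction G M] [MeasurableSpace M]
  {μ : Measure G}

lemma Stationary.add [MeasurableConstSMul G M] {ν₁ ν₂ : Measure M} (h₁ : Stationary μ ν₁)
    (h₂ : Stationary μ ν₂) : Stationary μ (ν₁ + ν₂) := by
  unfold Stationary at *
  simp_rw [Measure.map_add _ _ (measurable_const_smul _), smul_add, ← Measure.sum_add_sum, h₁, h₂]

lemma Stationary.smul [MeasurableConstSMul G M] {ν : Measure M} (h : Stationary μ ν)
    (c : ℝ≥0∞) : Stationary μ (c • ν) := by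
  unfold Stationary at *
  conv_rhs => rw [← h]
  ext s hs
  simp only [Measure.sum_apply _ hs, Measure.smul_apply, Measure.map_smul, smul_eq_mul,
    ← ENNReal.tsum_mul_left, mul_left_comm]

variable [Countable G] [MeasurableSingletonClass G] [TopologicalSpace M] [BorelSpace M]
  [ContinuousConstSMul G M]

lemma Stationary.integral_integral_smul [IsFiniteMeasure μ] {ν : Measure M} [IsFiniteMeasure ν]
    (h : Stationary μ ν) (f : M →ᵇ ℝ) : ∫ g, ∫ x, f (g • x) ∂ν ∂μ = ∫ x, f x ∂ν := by
  have hf : Integrable f (Measure.sum fun g : G => μ {g} • ν.map (g • ·)) := by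
    rw [h]; exact f.integrable ν
  calc ∫ g, ∫ x, f (g • x) ∂ν ∂μ = ∑' g, μ.real {g} • ∫ x, f (g • x) ∂ν :=
        integral_countable ((integrable_const _).mono' Measurable.of_discrete.aestronglyMeasurable
          (.of_forall (norm_integral_comp_smul_le ν f)))
    _ = ∑' g, ∫ x, f x ∂(μ {g} • ν.map (g • ·)) := by
        refine tsum_congr fun g => ?_
        rw [integral_smul_measure, integral_map (measurable_const_smul g).aemeasurable
          f.continuous.aestronglyMeasurable]
        rfl
    _ = ∫ x, f x ∂ν := by rw [← integral_sum_measure hf, h]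

lemma Stationary.integral_integral_mul_smul [IsFiniteMeasure μ] {ν : Measure M}
    [IsFiniteMeasure ν] (h : Stationary μ ν) (f : M →ᵇ ℝ) (a : G) :
    ∫ g, ∫ x, f ((a * g) • x) ∂ν ∂μ = ∫ x, f (a • x) ∂ν := by
  simpa only [mul_smul, BoundedContinuousFunction.compContinuous_apply, ContinuousMap.coe_mk] using
    h.integral_integral_smul (f.compContinuous ⟨(a • ·), continuous_const_smul a⟩)

lemma Stationary.integral_walk [IsProbabilityMeasure μ] {ν : Measure M} [IsProbabilityMeasure ν]
    (h : Stationary μ ν) {Ω : Type*} [MeasurableSpace Ω] {P : Measure Ω} [IsProbabilityMeasure P]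
    {X : ℕ → Ω → G} (hX : IsRW μ P X) (f : M →ᵇ ℝ) (n : ℕ) :
    ∫ ω, ∫ x, f (walk X ω n • x) ∂ν ∂P = ∫ x, f x ∂ν := by
  simpa only [one_smul] using hX.integral_walk_of_harmonic (norm_integral_comp_smul_le ν f)
    (h.integral_integral_mul_smul f) n

end Stationary

section PointMass

variable {M : Type*} [TopologicalSpace M] [MeasurableSpace M] [OpensMeasurableSpace M]

lemma TendstoPointMass.of_le_smul {σ ρ : ℕ → Measure M} [∀ i, IsProbabilityMeasure (ρ i)]
    [∀ i, IsFiniteMeasure (σ i)] {c : ℝ≥0∞} (hc : c ≠ ∞) (hle : ∀ i, ρ i ≤ c • σ i) {w : M}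
    (h : TendstoPointMass σ w) : TendstoPointMass ρ w := by
  intro f
  let g : M →ᵇ ℝ := |f - BoundedContinuousFunction.const M (f w)|
  have hg : Tendsto (fun i => c.toReal * ∫ x, g x ∂σ i) atTop (𝓝 0) := by
    simpa [g] using (h g).const_mul c.toReal
  refine tendsto_iff_dist_tendsto_zero.2 (squeeze_zero (fun _ => dist_nonneg) (fun i => ?_) hg)
  have : IsFiniteMeasure (c • σ i) := Measure.smul_finite _ hc
  calc dist (∫ x, f x ∂ρ i) (f w) = ‖∫ x, (f x - f w) ∂ρ i‖ := by
        rw [integral_sub (f.integrable _) (integrable_const _)]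
        simp [Real.dist_eq]
    _ ≤ ∫ x, g x ∂ρ i := norm_integral_le_integral_norm _
    _ ≤ ∫ x, g x ∂(c • σ i) :=
        integral_mono_measure (hle i) (.of_forall fun _ => abs_nonneg _) (g.integrable _)
    _ = c.toReal * ∫ x, g x ∂σ i := integral_smul_measure _ _

lemma TendstoPointMass.map_of_le_smul {ν ν' : Measure M} [IsProbabilityMeasure ν]
    [IsFiniteMeasure ν'] {c : ℝ≥0∞} (hc : c ≠ ∞) (hle : ν ≤ c • ν') {T : ℕ → M → M}
    (hT : ∀ i, Measurable (T i)) {w : M} (h : TendstoPointMass (fun i => ν'.map (T i)) w) :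
    TendstoPointMass (fun i => ν.map (T i)) w :=
  have := fun i => Measure.isProbabilityMeasure_map (μ := ν) (hT i).aemeasurable
  h.of_le_smul hc fun i => by
    simpa only [Measure.map_smul] using Measure.map_mono hle (hT i)

end PointMass

section Uniqueness

variable {G M : Type*} [Group G] [Countable G] [MeasurableSpace G] [MeasurableSingletonClass G]
  [MulAction G M] [TopologicalSpace M] [MeasurableSpace M]
  {μ : Measure G} {Ω : Type*} [MeasurableSpace Ω] {P : Measure Ω} {X : ℕ → Ω → G}

lemma IsRW.integrable_integral_comp_walk [IsFiniteMeasure P] (hX : IsRW μ P X) (ν : Measure M)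
    [IsFiniteMeasure ν] (f : M →ᵇ ℝ) (n : ℕ) :
    Integrable (fun ω => ∫ x, f (walk X ω n • x) ∂ν) P :=
  (integrable_const _).mono'
    ((Measurable.of_discrete (f := fun a : G => ∫ x, f (a • x) ∂ν)).comp
      (measurable_walk hX.1 n)).aestronglyMeasurable
    (.of_forall fun _ => norm_integral_comp_smul_le ν f _)

/-- The expected difference of the translated integrals is constant in time and tends to `0` by
dominated convergence. -/
lemma Stationary.integral_eq_of_ae_tendstoPointMass [BorelSpace M] [ContinuousConstSMul G M]
    [IsProbabilityMeasure μ] [IsProbabilityMeasure P] {ν₁ ν₂ : Measure M}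
    [IsProbabilityMeasure ν₁] [IsProbabilityMeasure ν₂]
    (hs₁ : Stationary μ ν₁) (hs₂ : Stationary μ ν₂) (hX : IsRW μ P X)
    (h : ∀ᵐ ω ∂P, ∃ w, TendstoPointMass (fun n => ν₁.map (walk X ω n • ·)) w ∧
      TendstoPointMass (fun n => ν₂.map (walk X ω n • ·)) w)
    (f : M →ᵇ ℝ) : ∫ x, f x ∂ν₁ = ∫ x, f x ∂ν₂ := by
  let F : ℕ → Ω → ℝ := fun n ω => ∫ x, f (walk X ω n • x) ∂ν₁ - ∫ x, f (walk X ω n • x) ∂ν₂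
  have hF : ∀ n, ∫ ω, F n ω ∂P = ∫ x, f x ∂ν₁ - ∫ x, f x ∂ν₂ := fun n => by
    rw [integral_sub (hX.integrable_integral_comp_walk ν₁ f n)
      (hX.integrable_integral_comp_walk ν₂ f n), hs₁.integral_walk hX, hs₂.integral_walk hX]
  have hlim : ∀ᵐ ω ∂P, Tendsto (F · ω) atTop (𝓝 0) := by
    filter_upwards [h] with ω ⟨w, hw₁, hw₂⟩
    have hmap : ∀ (ν : Measure M) n,
        ∫ x, f x ∂ν.map (walk X ω n • ·) = ∫ x, f (walk X ω n • x) ∂ν :=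
      fun ν n => integral_map (measurable_const_smul _).aemeasurable
        f.continuous.aestronglyMeasurable
    simpa only [hmap, sub_self] using (hw₁ f).sub (hw₂ f)
  have hconv := tendsto_integral_of_dominated_convergence (F := F) _
    (fun n => ((hX.integrable_integral_comp_walk ν₁ f n).sub
      (hX.integrable_integral_comp_walk ν₂ f n)).aestronglyMeasurable)
    (integrable_const (‖f‖ * ν₁.real Set.univ + ‖f‖ * ν₂.real Set.univ))
    (fun n => .of_forall fun ω => (norm_sub_le _ _).trans
      (add_le_add (norm_integral_comp_smul_le ν₁ f _) (norm_integral_comp_smul_le ν₂ f _))) hlim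
  simp only [hF, integral_zero] at hconv
  exact sub_eq_zero.1 (tendsto_nhds_unique tendsto_const_nhds hconv)

end Uniqueness

theorem stationary_measure_unique_general {G M : Type*} [Group G] [Countable G] [MeasurableSpace G]
    [MeasurableSingletonClass G] [MetricSpace M] [MeasurableSpace M]
    [BorelSpace M] [MulAction G M]
    (hc : ∀ g : G, Continuous (fun x : M => g • x))
    (μ : Measure G) [IsProbabilityMeasure μ]
    (hprox : ∀ ν : Measure M, IsProbabilityMeasure ν → Stationary μ ν → MuBoundary μ ν)
    (ν₁ ν₂ : Measure M) (h1 : IsProbabilityMeasure ν₁) (h2 : IsProbabilityMeasure ν₂)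
    (hs1 : Stationary μ ν₁) (hs2 : Stationary μ ν₂) : ν₁ = ν₂ := by
  have : ContinuousConstSMul G M := ⟨hc⟩
  let ν : Measure M := (2 : ℝ≥0∞)⁻¹ • (ν₁ + ν₂)
  have hν : IsProbabilityMeasure ν := ⟨by simp [ν, ENNReal.inv_two_add_inv_two]⟩
  have hle : ν₁ + ν₂ = (2 : ℝ≥0∞) • ν := by
    rw [smul_smul, ENNReal.mul_inv_cancel two_ne_zero ENNReal.ofNat_ne_top, one_smul]
  obtain ⟨Ω, _, P, hP, X, hX⟩ := exists_isRW μ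
  have hbd := hprox ν hν ((hs1.add hs2).smul _) Ω _ P hP X hX
  refine ext_of_forall_integral_eq_of_IsFiniteMeasure
    (hs1.integral_eq_of_ae_tendstoPointMass hs2 hX ?_)
  filter_upwards [hbd] with ω ⟨w, hw⟩
  exact ⟨w, hw.map_of_le_smul ENNReal.ofNat_ne_top (hle ▸ Measure.le_add_right le_rfl)
      fun _ => measurable_const_smul _,
    hw.map_of_le_smul ENNReal.ofNat_ne_top (hle ▸ Measure.le_add_left le_rfl)
      fun _ => measurable_const_smul _⟩

/-- If a countable group `G` acts by homeomorphisms on a compact metric space `M` and `M` is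
`μ`-proximal (every `μ`-stationary probability measure makes `(M, ν)` a `μ`-boundary), then
the `μ`-stationary Borel probability measure on `M` is unique. -/
theorem stationary_measure_unique {G M : Type*} [Group G] [Countable G] [MeasurableSpace G]
    [MeasurableSingletonClass G] [MetricSpace M] [CompactSpace M] [MeasurableSpace M]
    [BorelSpace M] [MulAction G M]
    (hc : ∀ g : G, Continuous (fun x : M => g • x))
    (μ : Measure G) [IsProbabilityMeasure μ]
    (hprox : ∀ ν : Measure M, IsProbabilityMeasure ν → Stationary μ ν → MuBoundary μ ν)
    (ν₁ ν₂ : Measure M) (h1 : IsProbabilityMeasure ν₁) (h2 : IsProbabilityMeasure ν₂)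
    (hs1 : Stationary μ ν₁) (hs2 : Stationary μ ν₂) : ν₁ = ν₂ :=
  stationary_measure_unique_general hc μ hprox ν₁ ν₂ h1 h2 hs1 hs2
end

section
/- Let a countable group G act on a space M, let μ be a nondegenerate probability measure on G, and let ν be a μ-stationary probability measure on M. Then for every g ∈ G there is a constant C''_g > 0 such that for every measurable set E ⊆ M with E ∪ gE = M, one has ν(E) ≥ C''_g. -/
/-!
Stationarity gives `μ{h} · ν(h⁻¹ • A) ≤ ν(A)` for each `h`, and iterating along a word
`h₁ ⋯ hₙ = g⁻¹` in the support of `μ` (nondegeneracy) yields a constant `c > 0` with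
`c · ν(g • E) ≤ ν(E)`. If `E ∪ g • E` covers `M` then `1 ≤ ν(E) + ν(g • E)`, hence
`min c 1 ≤ ν(E) + c · ν(g • E) ≤ 2 ν(E)`.
-/

open MeasureTheory

/-- A measure on a group is nondegenerate if its support generates the group as a
semigroup. -/
def Nondeg {G : Type*} [Group G] [MeasurableSpace G] (μ : Measure G) : Prop :=
  ∀ g : G, ∃ l : List G, l ≠ [] ∧ (∀ x ∈ l, 0 < μ {x}) ∧ l.prod = g

open scoped Pointwise

namespace Stationary

variable {G M : Type*} [Group G] [MeasurableSpace G] [MeasurableSpace M] [MulAction G M]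
  {μ : Measure G} {ν : Measure M}

theorem mul_measure_inv_smul_le (hν : Stationary μ ν)
    (hmeas : ∀ g : G, Measurable (fun x : M => g • x)) (h : G) {A : Set M}
    (hA : MeasurableSet A) : μ {h} * ν (h⁻¹ • A) ≤ ν A := by
  have hle : μ {h} • Measure.map (fun x : M => h • x) ν ≤ ν := by
    conv_rhs => rw [← hν]
    exact Measure.le_sum _ h
  simpa [Measure.map_apply (hmeas h) hA, Set.preimage_smul] using hle A

theorem list_prod_mul_measure_inv_smul_le (hν : Stationary μ ν)
    (hmeas : ∀ g : G, Measurable (fun x : M => g • x)) (l : List G) {A : Set M}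
    (hA : MeasurableSet A) : (l.map (μ {·})).prod * ν (l.prod⁻¹ • A) ≤ ν A := by
  induction l generalizing A with
  | nil => simp
  | cons h t ih =>
    have hA' : MeasurableSet (h⁻¹ • A) := by
      simpa [Set.preimage_smul] using hmeas h hA
    calc ((h :: t).map (μ {·})).prod * ν ((h :: t).prod⁻¹ • A)
        = μ {h} * ((t.map (μ {·})).prod * ν (t.prod⁻¹ • h⁻¹ • A)) := by
          simp [mul_assoc, mul_inv_rev, mul_smul]
      _ ≤ μ {h} * ν (h⁻¹ • A) := by gcongr; exact ih hA'
      _ ≤ ν A := hν.mul_measure_inv_smul_le hmeas h hA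

theorem exists_pos_mul_measure_smul_le (hν : Stationary μ ν) (hμ : Nondeg μ)
    (hmeas : ∀ g : G, Measurable (fun x : M => g • x)) (g : G) :
    ∃ c : ENNReal, 0 < c ∧ ∀ E : Set M, MeasurableSet E → c * ν (g • E) ≤ ν E := by
  obtain ⟨l, -, hpos, hprod⟩ := hμ g⁻¹
  refine ⟨(l.map (μ {·})).prod, ?_, fun E hE => ?_⟩
  · exact CanonicallyOrderedAdd.list_prod_pos.mpr (by simpa using hpos)
  · simpa [hprod] using hν.list_prod_mul_measure_inv_smul_le hmeas l hE

end Stationary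

theorem ENNReal.min_le_two_mul_of_mul_le_of_one_le_add {a b c : ENNReal} (hcb : c * b ≤ a)
    (hab : 1 ≤ a + b) : min c 1 ≤ 2 * a :=
  calc min c 1 ≤ min c 1 * (a + b) := le_mul_of_one_le_right' hab
    _ = min c 1 * a + min c 1 * b := mul_add _ _ _
    _ ≤ 1 * a + c * b := by gcongr <;> simp
    _ ≤ 2 * a := by rw [two_mul, one_mul]; gcongr

theorem stationary_covering_bound_general {G M : Type*} [Group G] [MeasurableSpace G]
    [MeasurableSpace M] [MulAction G M]
    (hmeas : ∀ g : G, Measurable (fun x : M => g • x))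
    (μ : Measure G) (hμ : Nondeg μ)
    (ν : Measure M) [IsProbabilityMeasure ν] (hν : Stationary μ ν) (g : G) :
    ∃ C : NNReal, 0 < C ∧ ∀ E : Set M, MeasurableSet E →
      E ∪ (fun x : M => g • x) '' E = Set.univ → (C : ENNReal) ≤ ν E := by
  obtain ⟨c, hc, hquasi⟩ := hν.exists_pos_mul_measure_smul_le hμ hmeas g
  have hmin : min c 1 ≠ ⊤ := (min_le_right c 1).trans_lt ENNReal.one_lt_top |>.ne
  refine ⟨(min c 1).toNNReal / 2, ?_, fun E hE hcover => ?_⟩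
  · exact div_pos (ENNReal.toNNReal_pos (lt_min hc one_pos).ne' hmin) two_pos
  have hsum : 1 ≤ ν E + ν (g • E) := by
    rw [Set.image_smul] at hcover
    simpa [hcover] using measure_union_le (μ := ν) E (g • E)
  have key := ENNReal.min_le_two_mul_of_mul_le_of_one_le_add (hquasi E hE) hsum
  rw [ENNReal.coe_div two_ne_zero, ENNReal.coe_toNNReal hmin]
  exact ENNReal.div_le_of_le_mul' key

/-- If a countable group `G` acts (measurably) on `M`, `μ` is a nondegenerate probability
measure on `G` and `ν` is a `μ`-stationary probability measure on `M`, then for every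
`g ∈ G` there is a constant `C''_g > 0` such that every measurable `E ⊆ M` with
`E ∪ gE = M` satisfies `ν(E) ≥ C''_g`. -/
theorem stationary_covering_bound {G M : Type*} [Group G] [Countable G] [MeasurableSpace G]
    [MeasurableSingletonClass G] [MeasurableSpace M] [MulAction G M]
    (hmeas : ∀ g : G, Measurable (fun x : M => g • x))
    (μ : Measure G) [IsProbabilityMeasure μ] (hμ : Nondeg μ)
    (ν : Measure M) [IsProbabilityMeasure ν] (hν : Stationary μ ν) (g : G) :
    ∃ C : NNReal, 0 < C ∧ ∀ E : Set M, MeasurableSet E →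
      E ∪ (fun x : M => g • x) '' E = Set.univ → (C : ENNReal) ≤ ν E :=
  stationary_covering_bound_general hmeas μ hμ ν hν g
end

section
/- Suppose a group G acts on a metric space M, ε > 0, and G contains a finite universally ε-contracting collection K for M. Then for every Borel probability measure λ on M, the set of all ε-contracting elements for λ is a cofinite subset of G (there is a finite set J ⊆ G with H·J = G, where H is the set of ε-contracting elements). -/
open MeasureTheory

/-- `g` is `ε`-contracting for the measure `λ`: the pushforward `gλ` gives mass at least
`1 - ε` to some closed ball of radius `ε`. -/
def EpsContracting {G M : Type*} [SMul G M] [PseudoMetricSpace M] [MeasurableSpace M]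
    (g : G) (ε : ℝ) (lam : Measure M) : Prop :=
  ∃ x : M, ENNReal.ofReal (1 - ε) ≤ Measure.map (fun y : M => g • y) lam (Metric.closedBall x ε)

/-- `K` is totally `ε`-contracting: it contains an `ε`-contracting element for every Borel
probability measure on `M`. -/
def TotContracting {G : Type*} (M : Type*) [SMul G M] [PseudoMetricSpace M]
    [MeasurableSpace M] (K : Set G) (ε : ℝ) : Prop :=
  ∀ lam : Measure M, IsProbabilityMeasure lam → ∃ g ∈ K, EpsContracting g ε lam

/-- `K` is universally `ε`-contracting: `hK` is totally `ε`-contracting for every `h`. -/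
def UnivContracting {G : Type*} (M : Type*) [Group G] [MulAction G M] [PseudoMetricSpace M]
    [MeasurableSpace M] (K : Set G) (ε : ℝ) : Prop :=
  ∀ h : G, TotContracting M ((fun x => h * x) '' K) ε

/-- If a group `G` acting on a metric space `M` contains a finite universally
`ε`-contracting collection `K`, then for every Borel probability measure `λ` on `M` the set
`H` of `ε`-contracting elements for `λ` is cofinite in `G`: there is a finite `J` with
`H · J = G`. -/
theorem contracting_set_cofinite {G M : Type*} [Group G] [MulAction G M]
    [PseudoMetricSpace M] [MeasurableSpace M] (ε : ℝ) (hε : 0 < ε)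
    (K : Finset G) (hK : UnivContracting M (↑K : Set G) ε)
    (lam : Measure M) (hlam : IsProbabilityMeasure lam) :
    ∃ J : Finset G, ∀ g : G, ∃ h : G, EpsContracting h ε lam ∧ ∃ j ∈ J, g = h * j := by
  classical
  refine ⟨K.image (·⁻¹), fun g => ?_⟩
  obtain ⟨hk, ⟨k, hkK, rfl⟩, hc⟩ := hK g lam hlam
  exact ⟨g * k, hc, k⁻¹, Finset.mem_image_of_mem _ hkK, by group⟩
end
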